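/- arXiv:2004.06469 — 2 statements merged into one kernel-verified Lean document; each statement's English description precedes it below -/
import Mathlib

section
/- Let f : 2^E × Φ → ℝ≥0 be adaptive monotone and adaptive submodular, and let π be any deterministic adaptive policy. Then for any step i ≥ 0, f_avg(π_{i+1}) − f_avg(π_i) ≤ E_Φ[max_e Δ(e | Ψ_i(π, Φ))], where π_i denotes the truncation of π to its first i selections, Ψ_i(π, φ) is the partial realization observed after π's first i selections under realization φ, and Δ(e | ψ) is the expected marginal benefit of item e conditioned on partial realization ψ. -/
/-! The observation `Ψ_i(π, Φ)` determines the item `π (Ψ_i)` selected next, and the realizations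
producing a given observation `ψ` are exactly those consistent with `ψ`. Conditioned on
`Ψ_i = ψ`, the expected gain of step `i + 1` is therefore `Δ(π ψ | ψ) ≤ max_e Δ(e | ψ)`. -/

open Finset
open scoped Classical

section Adaptive

variable {E O : Type*} [Fintype E] [Fintype O] [DecidableEq E] [Nonempty E]

/-- A partial realization: a partial assignment of states to items. -/
abbrev PReal (E O : Type*) := E → Option O

/-- A (full) realization `φ` is consistent with a partial realization `ψ`
(written `φ ∼ ψ`) if `φ` agrees with `ψ` on the domain of `ψ`. -/
def consistentR (φ : E → O) (ψ : PReal E O) : Prop := ∀ e o, ψ e = some o → φ e = o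

/-- The domain of a partial realization, i.e. the set of items already selected. -/
noncomputable def pdom (ψ : PReal E O) : Finset E :=
  Finset.univ.filter fun e => (ψ e).isSome

/-- The probability `Pr[Φ ∼ ψ]` that the random realization is consistent with `ψ`. -/
noncomputable def prMass (p : (E → O) → ℝ) (ψ : PReal E O) : ℝ :=
  ∑ φ ∈ Finset.univ.filter (fun φ => consistentR φ ψ), p φ

/-- The conditional expected marginal benefit `Δ(e | ψ)` of item `e` given the
partial realization `ψ`. -/
noncomputable def marginal (p : (E → O) → ℝ) (f : Finset E → (E → O) → ℝ)
    (e : E) (ψ : PReal E O) : ℝ :=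
  (∑ φ ∈ Finset.univ.filter (fun φ => consistentR φ ψ),
      p φ * (f (insert e (pdom ψ)) φ - f (pdom ψ) φ)) / prMass p ψ

/-- `max_e Δ(e | ψ)`, the best single-item conditional marginal benefit. -/
noncomputable def maxMarginal (p : (E → O) → ℝ) (f : Finset E → (E → O) → ℝ)
    (ψ : PReal E O) : ℝ :=
  Finset.univ.sup' Finset.univ_nonempty (fun e => marginal p f e ψ)

/-- Adaptive monotonicity: `Δ(e | ψ) ≥ 0` for every `e` and every `ψ` with
`Pr[Φ ∼ ψ] > 0`. -/
def AdaptiveMonotone (p : (E → O) → ℝ) (f : Finset E → (E → O) → ℝ) : Prop :=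
  ∀ ψ : PReal E O, 0 < prMass p ψ → ∀ e : E, 0 ≤ marginal p f e ψ

/-- `ψ` is a subrealization of `ψ'`. -/
def subreal (ψ ψ' : PReal E O) : Prop := ∀ e o, ψ e = some o → ψ' e = some o

/-- Adaptive submodularity: `Δ(e | ψ) ≥ Δ(e | ψ')` whenever `ψ ⊆ ψ'` and
`e ∉ dom(ψ')`. -/
def AdaptiveSubmodular (p : (E → O) → ℝ) (f : Finset E → (E → O) → ℝ) : Prop :=
  ∀ ψ ψ' : PReal E O, subreal ψ ψ' → ∀ e ∉ pdom ψ', marginal p f e ψ' ≤ marginal p f e ψ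

/-- A deterministic adaptive policy: picks the next item from the current
partial realization. -/
abbrev Policy (E O : Type*) := PReal E O → E

/-- `runP π φ i = Ψ_i(π, φ)`: the partial realization observed after policy `π`
selects its first `i` items under realization `φ`. -/
noncomputable def runP (π : Policy E O) (φ : E → O) : ℕ → PReal E O
  | 0 => fun _ => none
  | (i + 1) =>
      Function.update (runP π φ i) (π (runP π φ i)) (some (φ (π (runP π φ i))))

/-- `favg p f π i = f_avg(π_i)`: the expected utility of the truncated policy `π_i`. -/
noncomputable def favg (p : (E → O) → ℝ) (f : Finset E → (E → O) → ℝ)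
    (π : Policy E O) (i : ℕ) : ℝ :=
  ∑ φ : E → O, p φ * f (pdom (runP π φ i)) φ

end Adaptive

lemma Finset.sum_fiberwise_dep {ι κ M : Type*} [AddCommMonoid M] [Fintype κ] [DecidableEq κ]
    (s : Finset ι) (g : ι → κ) (F : κ → ι → M) :
    ∑ j, ∑ i ∈ s with g i = j, F j i = ∑ i ∈ s, F (g i) i := by
  rw [← sum_fiberwise s g]
  exact sum_congr rfl fun j _ => sum_congr rfl fun i hi => by rw [(mem_filter.1 hi).2]

section Adaptive

variable {E O : Type*} [DecidableEq E]

lemma consistentR_runP (π : Policy E O) (φ : E → O) (i : ℕ) :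
    consistentR φ (runP π φ i) := by
  induction i with
  | zero => intro e o h; simp [runP] at h
  | succ i ih =>
    intro e o h
    rw [runP, Function.update_apply] at h
    split_ifs at h with he
    · rw [he]; exact Option.some.inj h
    · exact ih e o h

lemma subreal_runP_succ (π : Policy E O) (φ : E → O) (i : ℕ) :
    subreal (runP π φ i) (runP π φ (i + 1)) := by
  intro e o h
  rw [runP, Function.update_apply]
  split_ifs with he
  · rw [← he, consistentR_runP π φ i e o h]
  · exact h

/-- A policy only sees the observed states, so a realization consistent with what `π` observed
under `φ₀` makes `π` observe the same thing. -/
lemma runP_eq_iff_consistentR (π : Policy E O) (φ φ₀ : E → O) (i : ℕ) :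
    runP π φ i = runP π φ₀ i ↔ consistentR φ (runP π φ₀ i) := by
  refine ⟨fun h => h ▸ consistentR_runP π φ i, fun h => ?_⟩
  induction i with
  | zero => rfl
  | succ i ih =>
    have hprev := ih fun e o he => h e o (subreal_runP_succ π φ₀ i e o he)
    have hnext : runP π φ₀ (i + 1) (π (runP π φ₀ i)) = some (φ₀ (π (runP π φ₀ i))) :=
      Function.update_self _ _ _
    rw [runP, runP, hprev, h _ _ hnext]

variable [Fintype E]

lemma pdom_update_some (ψ : PReal E O) (e : E) (o : O) :
    pdom (Function.update ψ e (some o)) = insert e (pdom ψ) := by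
  ext a
  by_cases h : a = e <;> simp [pdom, Function.update_apply, h]

lemma pdom_runP_succ (π : Policy E O) (φ : E → O) (i : ℕ) :
    pdom (runP π φ (i + 1)) = insert (π (runP π φ i)) (pdom (runP π φ i)) :=
  pdom_update_some _ _ _

variable [Fintype O]

lemma favg_succ_sub_favg (p : (E → O) → ℝ) (f : Finset E → (E → O) → ℝ) (π : Policy E O)
    (i : ℕ) :
    favg p f π (i + 1) - favg p f π i = ∑ φ, p φ *
      (f (insert (π (runP π φ i)) (pdom (runP π φ i))) φ - f (pdom (runP π φ i)) φ) := by
  rw [favg, favg, ← sum_sub_distrib]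
  exact sum_congr rfl fun φ _ => by rw [pdom_runP_succ, mul_sub]

lemma prMass_nonneg {p : (E → O) → ℝ} (hp : ∀ φ, 0 ≤ p φ) (ψ : PReal E O) : 0 ≤ prMass p ψ :=
  sum_nonneg fun φ _ => hp φ

/-- The junk value `Δ(e | ψ) = 0` at `Pr[Φ ∼ ψ] = 0` is harmless: then `p` vanishes on `{φ ∼ ψ}`. -/
lemma prMass_mul_marginal {p : (E → O) → ℝ} (hp : ∀ φ, 0 ≤ p φ) (f : Finset E → (E → O) → ℝ)
    (e : E) (ψ : PReal E O) :
    prMass p ψ * marginal p f e ψ = ∑ φ with consistentR φ ψ,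
      p φ * (f (insert e (pdom ψ)) φ - f (pdom ψ) φ) := by
  by_cases h0 : prMass p ψ = 0
  · have hzero := (sum_eq_zero_iff_of_nonneg fun φ _ => hp φ).1 h0
    rw [h0, zero_mul]
    exact (sum_eq_zero fun φ hφ => by rw [hzero φ hφ, zero_mul]).symm
  · exact mul_div_cancel₀ _ h0

variable [Nonempty E]

lemma sum_consistentR_gain_le_maxMarginal {p : (E → O) → ℝ} (hp : ∀ φ, 0 ≤ p φ)
    (f : Finset E → (E → O) → ℝ) (e : E) (ψ : PReal E O) :
    ∑ φ with consistentR φ ψ, p φ * (f (insert e (pdom ψ)) φ - f (pdom ψ) φ) ≤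
      ∑ φ with consistentR φ ψ, p φ * maxMarginal p f ψ :=
  calc _ = prMass p ψ * marginal p f e ψ := (prMass_mul_marginal hp f e ψ).symm
    _ ≤ prMass p ψ * maxMarginal p f ψ :=
      mul_le_mul_of_nonneg_left (le_sup' (fun e => marginal p f e ψ) (mem_univ e))
        (prMass_nonneg hp ψ)
    _ = _ := sum_mul _ _ _

lemma sum_runP_fiber_gain_le_maxMarginal {p : (E → O) → ℝ} (hp : ∀ φ, 0 ≤ p φ)
    (f : Finset E → (E → O) → ℝ) (π : Policy E O) (i : ℕ) (ψ : PReal E O) :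
    ∑ φ with runP π φ i = ψ, p φ * (f (insert (π ψ) (pdom ψ)) φ - f (pdom ψ) φ) ≤
      ∑ φ with runP π φ i = ψ, p φ * maxMarginal p f ψ := by
  obtain hempty | ⟨φ₀, hφ₀⟩ := eq_empty_or_nonempty (univ.filter fun φ => runP π φ i = ψ)
  · simp [hempty]
  · have hfiber : univ.filter (fun φ => runP π φ i = ψ) = univ.filter (consistentR · ψ) := by
      obtain rfl := (mem_filter.1 hφ₀).2
      exact filter_congr fun φ _ => runP_eq_iff_consistentR π φ φ₀ i
    rw [hfiber]
    exact sum_consistentR_gain_le_maxMarginal hp f (π ψ) ψ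

end Adaptive

theorem favg_step_le_expected_max_general {E O : Type*} [Fintype E] [Fintype O] [DecidableEq E]
    [Nonempty E] (p : (E → O) → ℝ) (hp : ∀ φ, 0 ≤ p φ)
    (f : Finset E → (E → O) → ℝ)
    (π : Policy E O) (i : ℕ) :
    favg p f π (i + 1) - favg p f π i ≤
      ∑ φ : E → O, p φ * maxMarginal p f (runP π φ i) := by
  rw [favg_succ_sub_favg, ← sum_fiberwise_dep univ (fun φ => runP π φ i)
      (fun ψ φ => p φ * (f (insert (π ψ) (pdom ψ)) φ - f (pdom ψ) φ)),
    ← sum_fiberwise_dep univ (fun φ => runP π φ i) (fun ψ φ => p φ * maxMarginal p f ψ)]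
  exact sum_le_sum fun ψ _ => sum_runP_fiber_gain_le_maxMarginal hp f π i ψ

/-- (Lemma 1) For an adaptive monotone, adaptive submodular `f` and any deterministic
adaptive policy `π`, `f_avg(π_{i+1}) − f_avg(π_i) ≤ E_Φ[max_e Δ(e | Ψ_i(π, Φ))]`. -/
theorem favg_step_le_expected_max {E O : Type*} [Fintype E] [Fintype O] [DecidableEq E]
    [Nonempty E] (p : (E → O) → ℝ) (hp : ∀ φ, 0 ≤ p φ) (hp1 : ∑ φ : E → O, p φ = 1)
    (f : Finset E → (E → O) → ℝ) (hf : ∀ S φ, 0 ≤ f S φ)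
    (hmono : AdaptiveMonotone p f) (hsub : AdaptiveSubmodular p f)
    (π : Policy E O) (i : ℕ) :
    favg p f π (i + 1) - favg p f π i ≤
      ∑ φ : E → O, p φ * maxMarginal p f (runP π φ i) :=
  favg_step_le_expected_max_general p hp f π i
end

section
/- Let R be a random reverse-reachable (RR) set of a directed graph G with n nodes under the independent cascade model. Then for any seed set S ⊆ V, E[I_G(S)] = n · Pr[R ∩ S ≠ ∅], where I_G(S) is the (random) number of nodes reachable from S in a random live-edge graph. -/
open scoped Classical

/-- Probability of the live-edge graph `g` under the IC model with edge probabilities `p`. -/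
noncomputable def liveProb {V : Type*} [Fintype V] (p : V → V → ℝ) (g : V → V → Bool) : ℝ :=
  ∏ u : V, ∏ v : V, (if g u v then p u v else 1 - p u v)

/-- `s` can reach `v` along live edges of `g`. -/
def reachB {V : Type*} (g : V → V → Bool) (s v : V) : Prop :=
  Relation.ReflTransGen (fun a b => g a b = true) s v

/-- `I_G(S)` in the live-edge graph `g`: the number of nodes reachable from `S`. -/
noncomputable def spread {V : Type*} [Fintype V] (g : V → V → Bool) (S : Finset V) : ℕ :=
  (Finset.univ.filter fun v => ∃ s ∈ S, reachB g s v).card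

theorem Fintype.card_mul_sum_one_div_mul {ι : Type*} [Fintype ι] (f : ι → ℝ) :
    (Fintype.card ι : ℝ) * ∑ i, (1 / (Fintype.card ι : ℝ)) * f i = ∑ i, f i := by
  rcases isEmpty_or_nonempty ι with _ | _
  · simp
  · rw [← Finset.mul_sum, ← mul_assoc, mul_one_div_cancel (by positivity), one_mul]

theorem spread_eq_sum_ite {V : Type*} [Fintype V] (g : V → V → Bool) (S : Finset V) :
    (spread g S : ℝ) = ∑ v, if ∃ s ∈ S, reachB g s v then 1 else 0 := by
  rw [spread, Finset.card_filter]
  push_cast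
  rfl

theorem expected_spread_eq_RR_general {V : Type*} [Fintype V] [DecidableEq V]
    (p : V → V → ℝ) (S : Finset V) :
    ∑ g : V → V → Bool, liveProb p g * (spread g S : ℝ)
      = (Fintype.card V : ℝ) *
          ∑ v : V, (1 / (Fintype.card V : ℝ)) *
            ∑ g : V → V → Bool, liveProb p g * (if ∃ s ∈ S, reachB g s v then 1 else 0) := by
  simp_rw [Fintype.card_mul_sum_one_div_mul, spread_eq_sum_ite, Finset.mul_sum]
  exact Finset.sum_comm

/-- `E[I_G(S)] = n · Pr[R ∩ S ≠ ∅]`, where `R` is a random RR-set obtained by picking a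
uniform random node `v` and taking the nodes that can reach `v` in an independent random
live-edge graph. -/
theorem expected_spread_eq_RR {V : Type*} [Fintype V] [DecidableEq V]
    (p : V → V → ℝ) (hp : ∀ u v, 0 ≤ p u v ∧ p u v ≤ 1) (S : Finset V) :
    ∑ g : V → V → Bool, liveProb p g * (spread g S : ℝ)
      = (Fintype.card V : ℝ) *
          ∑ v : V, (1 / (Fintype.card V : ℝ)) *
            ∑ g : V → V → Bool, liveProb p g * (if ∃ s ∈ S, reachB g s v then 1 else 0) :=
  expected_spread_eq_RR_general p S
end
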